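/- arXiv:0705.0670 — 2 statements merged into one kernel-verified Lean document; each statement's English description precedes it below -/
import Mathlib

section
/- Let G be a finitely generated group and {X_n} an exhaustive sequence of finite subsets such that the sequence {X_n^{-1}} is amenable (a Følner sequence). Then the Besicovitch pseudodistance d_{B,{X_n}} on Q^G is invariant under translations: d_{B,{X_n}}(c_1^g, c_2^g) = d_{B,{X_n}}(c_1, c_2) for all configurations c_1, c_2 and all g ∈ G, where c^g(h) = c(gh). -/
open Filter Pointwise

noncomputable def hamDist {G Q : Type*} (U : Set G) (c₁ c₂ : G → Q) : ℕ :=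
  {x ∈ U | c₁ x ≠ c₂ x}.ncard

noncomputable def besDist {G Q : Type*} (X : ℕ → Finset G) (c₁ c₂ : G → Q) : ℝ :=
  limsup (fun n => (hamDist (X n : Set G) c₁ c₂ : ℝ) / (X n).card) atTop

def IsExhaustive {G : Type*} (X : ℕ → Finset G) : Prop :=
  (∀ n, X n ⊆ X (n + 1)) ∧ ∀ g : G, ∃ n, g ∈ X n

/-- An amenable (Følner) exhaustive sequence: `|X_n E⁻¹ \ X_n| / |X_n| → 0`
for every finite `E`. -/
def IsFolner {G : Type*} [Group G] [DecidableEq G] (X : ℕ → Finset G) : Prop :=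
  IsExhaustive X ∧ ∀ E : Finset G,
    Tendsto (fun n => (((X n * E⁻¹) \ X n).card : ℝ) / (X n).card) atTop (nhds 0)

/-!
Translating both configurations by `g` replaces the window `X n` by `g • X n`, and the numbers of
disagreements in the two windows differ by at most `|g • X n \ X n| + |X n \ g • X n|`. Inverting,
`g • X n \ X n` becomes `(X n)⁻¹ * {g}⁻¹ \ (X n)⁻¹`, the `{g}`-boundary of `(X n)⁻¹`; so the Følner
property of `(X n)⁻¹` makes the error `o(|X n|)`, and bounded density sequences whose difference
tends to `0` have the same `limsup`.
-/

open Topology Finset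

theorem Filter.limsup_le_of_tendsto_sub {ι : Type*} {f : Filter ι} [f.NeBot] {u v : ι → ℝ}
    (hv : IsBoundedUnder (· ≤ ·) f v) (hv' : IsBoundedUnder (· ≥ ·) f v)
    (h : Tendsto (u - v) f (𝓝 0)) : limsup u f ≤ limsup v f := by
  calc limsup u f = limsup (v + (u - v)) f := by rw [add_sub_cancel]
    _ ≤ limsup v f + limsup (u - v) f :=
      limsup_add_le hv' hv h.isCoboundedUnder_le h.isBoundedUnder_le
    _ = limsup v f := by rw [h.limsup_eq, add_zero]

theorem Filter.limsup_eq_of_tendsto_sub {ι : Type*} {f : Filter ι} [f.NeBot] {u v : ι → ℝ}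
    (hu : IsBoundedUnder (· ≤ ·) f u) (hu' : IsBoundedUnder (· ≥ ·) f u)
    (hv : IsBoundedUnder (· ≤ ·) f v) (hv' : IsBoundedUnder (· ≥ ·) f v)
    (h : Tendsto (u - v) f (𝓝 0)) : limsup u f = limsup v f :=
  (limsup_le_of_tendsto_sub hv hv' h).antisymm <|
    limsup_le_of_tendsto_sub hu hu' (by rw [← neg_sub, ← neg_zero]; exact h.neg)

section HammingDistance

variable {G Q : Type*} (c₁ c₂ : G → Q)

theorem hamDist_comp_mul_left [Group G] (U : Set G) (g : G) :
    hamDist U (fun h => c₁ (g * h)) (fun h => c₂ (g * h)) = hamDist (g • U) c₁ c₂ := by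
  rw [hamDist, hamDist, ← Set.ncard_image_of_injective _ (mul_right_injective g)]
  congr 1
  ext x
  simp [Set.mem_smul_set_iff_inv_smul_mem, Set.image_mul_left]

theorem hamDist_le_ncard {U : Set G} (hU : U.Finite) : hamDist U c₁ c₂ ≤ U.ncard :=
  Set.ncard_le_ncard (Set.sep_subset _ _) hU

theorem hamDist_le_hamDist_add_ncard_diff {U V : Set G} (hU : U.Finite) (hV : V.Finite) :
    hamDist U c₁ c₂ ≤ hamDist V c₁ c₂ + (U \ V).ncard := by
  have hsub : {x ∈ U | c₁ x ≠ c₂ x} ⊆ {x ∈ V | c₁ x ≠ c₂ x} ∪ U \ V := by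
    rintro x ⟨hxU, hx⟩
    by_cases hxV : x ∈ V
    exacts [Or.inl ⟨hxV, hx⟩, Or.inr ⟨hxU, hxV⟩]
  exact (Set.ncard_le_ncard hsub ((hV.sep _).union hU.sdiff)).trans (Set.ncard_union_le _ _)

theorem abs_sub_hamDist_le {U V : Set G} (hU : U.Finite) (hV : V.Finite) :
    |(hamDist U c₁ c₂ : ℝ) - hamDist V c₁ c₂| ≤ (U \ V).ncard + (V \ U).ncard := by
  have hUV := hamDist_le_hamDist_add_ncard_diff c₁ c₂ hU hV
  have hVU := hamDist_le_hamDist_add_ncard_diff c₁ c₂ hV hU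
  rw [abs_sub_le_iff]
  constructor <;> push_cast [← Nat.cast_le (α := ℝ)] at hUV hVU <;> linarith

theorem isBoundedUnder_hamDist_div_card {ι : Type*} {l : Filter ι} (F X : ι → Finset G)
    (hFX : ∀ i, #(F i) ≤ #(X i)) :
    IsBoundedUnder (· ≤ ·) l (fun i => (hamDist (F i : Set G) c₁ c₂ : ℝ) / #(X i)) ∧
      IsBoundedUnder (· ≥ ·) l (fun i => (hamDist (F i : Set G) c₁ c₂ : ℝ) / #(X i)) := by
  refine ⟨isBoundedUnder_of ⟨1, fun i => div_le_one_of_le₀ ?_ (by positivity)⟩,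
    isBoundedUnder_of ⟨0, fun i => by positivity⟩⟩
  have := hamDist_le_ncard c₁ c₂ (F i).finite_toSet
  rw [Set.ncard_coe_finset] at this
  exact_mod_cast this.trans (hFX i)

end HammingDistance

section Folner

variable {G : Type*} [Group G] [DecidableEq G]

theorem Finset.inv_smul_finset_sdiff (s : Finset G) (g : G) :
    (g • s \ s)⁻¹ = (s⁻¹ * ({g} : Finset G)⁻¹) \ s⁻¹ := by
  ext x
  simp [mem_inv', ← inv_smul_mem_iff, mul_singleton]

theorem Finset.card_sdiff_smul_finset (s : Finset G) (g : G) : #(s \ g • s) = #(g⁻¹ • s \ s) := by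
  rw [← card_smul_finset g (g⁻¹ • s \ s), smul_finset_sdiff, smul_inv_smul]

variable {X : ℕ → Finset G}

theorem tendsto_card_smul_sdiff_div_card (hX : IsFolner fun n => (X n)⁻¹) (g : G) :
    Tendsto (fun n => (#(g • X n \ X n) : ℝ) / #(X n)) atTop (𝓝 0) := by
  simpa only [← inv_smul_finset_sdiff, card_inv] using hX.2 {g}

theorem tendsto_card_sdiff_smul_div_card (hX : IsFolner fun n => (X n)⁻¹) (g : G) :
    Tendsto (fun n => (#(X n \ g • X n) : ℝ) / #(X n)) atTop (𝓝 0) := by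
  simpa only [card_sdiff_smul_finset] using tendsto_card_smul_sdiff_div_card hX g⁻¹

end Folner

theorem besicovitch_translation_invariant_of_folner_inv_general
    {G Q : Type*} [Group G] [DecidableEq G]
    (X : ℕ → Finset G) (hXinv : IsFolner (fun n => (X n)⁻¹)) :
    ∀ (g : G) (c₁ c₂ : G → Q),
      besDist X (fun h => c₁ (g * h)) (fun h => c₂ (g * h)) = besDist X c₁ c₂ := by
  intro g c₁ c₂
  have hshift : besDist X (fun h => c₁ (g * h)) (fun h => c₂ (g * h)) =
      limsup (fun n => (hamDist (g • X n : Finset G) c₁ c₂ : ℝ) / #(X n)) atTop := by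
    simp only [besDist, hamDist_comp_mul_left, coe_smul_finset]
  obtain ⟨hu, hu'⟩ := isBoundedUnder_hamDist_div_card c₁ c₂ (fun n => g • X n) X (l := atTop)
    fun _ => card_smul_finset_le
  obtain ⟨hv, hv'⟩ := isBoundedUnder_hamDist_div_card c₁ c₂ X X (l := atTop) fun n => le_rfl
  have hsymm := (tendsto_card_smul_sdiff_div_card hXinv g).add
    (tendsto_card_sdiff_smul_div_card hXinv g)
  rw [add_zero] at hsymm
  rw [hshift, besDist]
  refine limsup_eq_of_tendsto_sub hu hu' hv hv' (squeeze_zero_norm (fun n => ?_) hsymm)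
  rw [Real.norm_eq_abs, Pi.sub_apply, ← sub_div, abs_div, Nat.abs_cast, ← add_div]
  gcongr
  have h := abs_sub_hamDist_le c₁ c₂ (g • X n).finite_toSet (X n).finite_toSet
  rwa [← coe_sdiff, ← coe_sdiff, Set.ncard_coe_finset, Set.ncard_coe_finset] at h

theorem besicovitch_translation_invariant_of_folner_inv
    {G Q : Type*} [Group G] [DecidableEq G] [Fintype Q] (hQ : 2 ≤ Fintype.card Q)
    (X : ℕ → Finset G) (hX : IsExhaustive X) (hXinv : IsFolner (fun n => (X n)⁻¹)) :
    ∀ (g : G) (c₁ c₂ : G → Q),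
      besDist X (fun h => c₁ (g * h)) (fun h => c₂ (g * h)) = besDist X c₁ c₂ :=
  besicovitch_translation_invariant_of_folner_inv_general X hXinv
end

section
/- Let A = ⟨Q, N, f⟩ be a cellular automaton over a finitely generated group G, and let {X_n} be an amenable exhaustive sequence. Then the global map F_A is Lipschitz continuous with respect to the Besicovitch pseudodistance d_{B,{X_n}}, with Lipschitz constant 1 + |N|: d_{B,{X_n}}(F_A(c_1), F_A(c_2)) ≤ (1+|N|) · d_{B,{X_n}}(c_1, c_2) for all c_1, c_2 ∈ Q^G. -/
/-!
If the images `F c₁`, `F c₂` differ at `g ∈ s`, then `c₁`, `c₂` differ at some `g * x` with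
`x ∈ N`, and `g * x` lies either in `s` or in the boundary `s * N \ s`. Hence the disagreements of
the images inside `s` lie in `(D ∪ (s * N \ s)) * N⁻¹`, where `D` is the set of disagreements of
`c₁`, `c₂` inside `s`, which gives `H_s(F c₁, F c₂) ≤ |N| (H_s(c₁, c₂) + |s * N \ s|)`. Along a
Følner sequence the normalized boundary term tends to `0`, so in the limsup the constant is
already `|N|`.
-/

open Filter Pointwise

def caMap {G Q : Type*} [Group G] (N : Finset G) (f : (N → Q) → Q) :
    (G → Q) → G → Q :=
  fun c g => f (fun x => c (g * x.1))

open scoped Topology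

theorem Filter.limsup_le_mul_limsup_of_le_mul_add {ι : Type*} {l : Filter ι} [l.NeBot]
    {a b e : ι → ℝ} {K : ℝ} (hK : 0 ≤ K) (ha : 0 ≤ a) (hb₀ : 0 ≤ b)
    (hb : IsBoundedUnder (· ≤ ·) l b) (he : Tendsto e l (𝓝 0))
    (hab : ∀ᶠ i in l, a i ≤ K * b i + e i) :
    limsup a l ≤ K * limsup b l := by
  have hKb : IsBoundedUnder (· ≤ ·) l (fun i => K * b i) := by
    obtain ⟨M, hM⟩ := hb
    exact ⟨K * M, hM.mono fun i hi => mul_le_mul_of_nonneg_left hi hK⟩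
  have hKb₀ : IsBoundedUnder (· ≥ ·) l (fun i => K * b i) :=
    isBoundedUnder_of ⟨0, fun i => mul_nonneg hK (hb₀ i)⟩
  calc limsup a l ≤ limsup (fun i => K * b i + e i) l :=
        limsup_le_limsup hab (isCoboundedUnder_le_of_le l ha)
          (isBoundedUnder_le_add hKb he.isBoundedUnder_le)
    _ ≤ limsup (fun i => K * b i) l + limsup e l :=
        limsup_add_le hKb₀ hKb he.isCoboundedUnder_le he.isBoundedUnder_le
    _ = K * limsup b l := by
        rw [he.limsup_eq, add_zero]
        have hmono : Monotone (fun x : ℝ => K * x) := fun _ _ h => mul_le_mul_of_nonneg_left h hK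
        exact (hmono.map_limsup_of_continuousAt b (continuous_const_mul K).continuousAt hb
          (isCoboundedUnder_le_of_le l hb₀)).symm

open Classical in
theorem hamDist_coe_finset {G Q : Type*} (s : Finset G) (c₁ c₂ : G → Q) :
    hamDist (s : Set G) c₁ c₂ = (s.filter fun x => c₁ x ≠ c₂ x).card := by
  rw [hamDist, ← Set.ncard_coe_finset, Finset.coe_filter]
  rfl

theorem hamDist_le_card {G Q : Type*} (s : Finset G) (c₁ c₂ : G → Q) :
    hamDist (s : Set G) c₁ c₂ ≤ s.card := by
  classical
  rw [hamDist_coe_finset]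
  exact Finset.card_filter_le _ _

theorem hamDist_div_card_le_one {G Q : Type*} (s : Finset G) (c₁ c₂ : G → Q) :
    (hamDist (s : Set G) c₁ c₂ : ℝ) / s.card ≤ 1 :=
  div_le_one_of_le₀ (by exact_mod_cast hamDist_le_card s c₁ c₂) (Nat.cast_nonneg _)

theorem besDist_nonneg {G Q : Type*} (X : ℕ → Finset G) (c₁ c₂ : G → Q) :
    0 ≤ besDist X c₁ c₂ :=
  le_limsup_of_frequently_le (Frequently.of_forall fun _ => by positivity)
    (isBoundedUnder_of ⟨1, fun n => hamDist_div_card_le_one (X n) c₁ c₂⟩)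

theorem exists_ne_of_caMap_ne {G Q : Type*} [Group G] {N : Finset G} {f : (N → Q) → Q}
    {c₁ c₂ : G → Q} {g : G} (h : caMap N f c₁ g ≠ caMap N f c₂ g) :
    ∃ x ∈ N, c₁ (g * x) ≠ c₂ (g * x) := by
  by_contra! hall
  exact h (congrArg f (funext fun x => hall x x.2))

open Classical in
theorem filter_caMap_ne_subset {G Q : Type*} [Group G] [DecidableEq G]
    (N : Finset G) (f : (N → Q) → Q) (s : Finset G) (c₁ c₂ : G → Q) :
    (s.filter fun g => caMap N f c₁ g ≠ caMap N f c₂ g) ⊆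
      ((s.filter fun h => c₁ h ≠ c₂ h) ∪ (s * N) \ s) * N⁻¹ := by
  intro g hg
  obtain ⟨hgs, hne⟩ := Finset.mem_filter.1 hg
  obtain ⟨x, hxN, hx⟩ := exists_ne_of_caMap_ne hne
  have hgx : g * x ∈ (s.filter fun h => c₁ h ≠ c₂ h) ∪ (s * N) \ s := by
    by_cases hmem : g * x ∈ s
    · exact Finset.mem_union_left _ (Finset.mem_filter.2 ⟨hmem, hx⟩)
    · exact Finset.mem_union_right _ (Finset.mem_sdiff.2 ⟨Finset.mul_mem_mul hgs hxN, hmem⟩)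
  simpa using Finset.mul_mem_mul hgx (Finset.inv_mem_inv hxN)

theorem hamDist_caMap_le {G Q : Type*} [Group G] [DecidableEq G]
    (N : Finset G) (f : (N → Q) → Q) (s : Finset G) (c₁ c₂ : G → Q) :
    hamDist (s : Set G) (caMap N f c₁) (caMap N f c₂) ≤
      N.card * (hamDist (s : Set G) c₁ c₂ + ((s * N) \ s).card) := by
  classical
  rw [hamDist_coe_finset, hamDist_coe_finset]
  calc _ ≤ (((s.filter fun h => c₁ h ≠ c₂ h) ∪ (s * N) \ s) * N⁻¹).card :=
        Finset.card_le_card (filter_caMap_ne_subset N f s c₁ c₂)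
    _ ≤ ((s.filter fun h => c₁ h ≠ c₂ h) ∪ (s * N) \ s).card * N⁻¹.card := Finset.card_mul_le
    _ ≤ N.card * ((s.filter fun h => c₁ h ≠ c₂ h).card + ((s * N) \ s).card) := by
        rw [Finset.card_inv, mul_comm]
        exact Nat.mul_le_mul_left _ (Finset.card_union_le _ _)

theorem hamDist_caMap_div_card_le {G Q : Type*} [Group G] [DecidableEq G]
    (N : Finset G) (f : (N → Q) → Q) (s : Finset G) (c₁ c₂ : G → Q) :
    (hamDist (s : Set G) (caMap N f c₁) (caMap N f c₂) : ℝ) / s.card ≤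
      N.card * ((hamDist (s : Set G) c₁ c₂ : ℝ) / s.card) +
        N.card * ((((s * N) \ s).card : ℝ) / s.card) := by
  rw [← mul_add, ← add_div, ← mul_div_assoc]
  gcongr
  exact_mod_cast hamDist_caMap_le N f s c₁ c₂

theorem ca_lipschitz_besicovitch_folner_general {G Q : Type*} [Group G] [DecidableEq G]
    (N : Finset G) (f : (N → Q) → Q)
    (X : ℕ → Finset G) (hX : IsFolner X) (c₁ c₂ : G → Q) :
    besDist X (caMap N f c₁) (caMap N f c₂) ≤ (1 + N.card) * besDist X c₁ c₂ := by
  have hboundary : Tendsto (fun n => (((X n * N) \ X n).card : ℝ) / (X n).card) atTop (𝓝 0) := by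
    simpa using hX.2 N⁻¹
  have hlip : besDist X (caMap N f c₁) (caMap N f c₂) ≤ N.card * besDist X c₁ c₂ :=
    limsup_le_mul_limsup_of_le_mul_add (Nat.cast_nonneg _) (fun _ => by positivity)
      (fun _ => by positivity) (isBoundedUnder_of ⟨1, fun n => hamDist_div_card_le_one _ c₁ c₂⟩)
      (by simpa using hboundary.const_mul (N.card : ℝ))
      (Eventually.of_forall fun n => hamDist_caMap_div_card_le N f (X n) c₁ c₂)
  linarith [besDist_nonneg X c₁ c₂]

/-- The global map of a CA is Lipschitz with constant `1 + |N|` with respect to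
the Besicovitch pseudodistance induced by an amenable exhaustive sequence. -/
theorem ca_lipschitz_besicovitch_folner {G Q : Type*} [Group G] [DecidableEq G]
    [Fintype Q] (hQ : 2 ≤ Fintype.card Q)
    (N : Finset G) (hN : N.Nonempty) (f : (N → Q) → Q)
    (X : ℕ → Finset G) (hX : IsFolner X) (c₁ c₂ : G → Q) :
    besDist X (caMap N f c₁) (caMap N f c₂) ≤ (1 + N.card) * besDist X c₁ c₂ :=
  ca_lipschitz_besicovitch_folner_general N f X hX c₁ c₂
end
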